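/- Let T : I → I be a Borel measurable map of a compact interval I, let ζ ∈ I be a periodic point of T of period p ≥ 1 such that T^p restricted to some neighbourhood of ζ is a C¹ diffeomorphism onto its image with |(T^p)′(ζ)| > 1, and let μ be a T-invariant Borel probability measure on I, absolutely continuous with respect to Lebesgue measure, whose density has a version that is continuous and strictly positive at ζ. Set θ = 1 − |(T^p)′(ζ)|^{−1} ∈ (0,1), let (B_n) be open balls centred at ζ with radii tending to 0, and for x ∈ E(B_n) define the cluster size K_n(x) = inf{k ≥ 0 : T^p(x) ∈ Q_k(B_n)}. Then for every n and every k ≥ 0 the exact identity μ_{E(B_n)}({x : T^p(x) ∈ U_k(B_n)}) = μ(Q_k(B_n))/μ(Q(B_n)) holds, and consequently for every k ≥ 0, μ_{E(B_n)}({K_n = k}) → θ(1−θ)^k as n → ∞; that is, under μ_{E(B_n)} the cluster size K_n converges in distribution to the geometric law with parameter θ on {0,1,2,…}. -/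

import Mathlib

open MeasureTheory Filter Set ProbabilityTheory
open scoped ENNReal Topology

noncomputable section

variable {X : Type*}

/-- `U_0(B) = B` and `U_{k+1}(B) = T^{-p}(U_k(B)) ∩ B`. -/
def Uset (T : X → X) (p : ℕ) (B : Set X) : ℕ → Set X
  | 0 => B
  | (k+1) => (T^[p]) ⁻¹' (Uset T p B k) ∩ B

/-- The annuli: `Q_0(B) = B ∩ T^{-p}(Bᶜ)` and `Q_{k+1}(B) = T^{-p}(Q_k(B)) ∩ B`. -/
def Qann (T : X → X) (p : ℕ) (B : Set X) : ℕ → Set X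
  | 0 => B ∩ (T^[p]) ⁻¹' Bᶜ
  | (k+1) => (T^[p]) ⁻¹' (Qann T p B k) ∩ B

/-- The entrance set `E(B) = T^{-p}(B) ∖ B`. -/
def Eset (T : X → X) (p : ℕ) (B : Set X) : Set X := (T^[p]) ⁻¹' B \ B

end

/-! The identity is pure bookkeeping: for `A ⊆ B` one has `E(B) ∩ T^{-p}A = T^{-p}A ∖ B`, so
invariance of `μ` under `T^p` gives `μ(E(B) ∩ T^{-p}U_k) = μ(U_k) - μ(U_{k+1}) = μ(Q_k)`, and the
law of the cluster size is the normalised second difference of `k ↦ μ(U_k(B))`.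

For the limit, differentiability of `T^p` at the fixed point `ζ` shows that `T^p` multiplies
distances to `ζ` by a factor close to `λ = |(T^p)'(ζ)|`, whence
`ball(ζ, r/(λ+ε)^k) ⊆ U_k(ball(ζ, r)) ⊆ ball(ζ, r/(λ-ε)^k)` for small `r`. As the density is
continuous and positive at `ζ`, `μ(ball(ζ, s)) ~ 2ρ(ζ)s`, so `μ(U_k(B_n))/μ(B_n) → λ^{-k}`, and the
second differences tend to `(1 - λ⁻¹) λ^{-k}`. -/

section ReturnSets

variable {X : Type*} (T : X → X) (p : ℕ) (B : Set X)

lemma Uset_subset : ∀ k, Uset T p B k ⊆ B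
  | 0 => subset_rfl
  | _ + 1 => inter_subset_right

lemma Qann_subset : ∀ k, Qann T p B k ⊆ B
  | 0 => inter_subset_left
  | _ + 1 => inter_subset_right

lemma Uset_succ_subset : ∀ k, Uset T p B (k + 1) ⊆ Uset T p B k
  | 0 => inter_subset_right
  | k + 1 => inter_subset_inter_left _ (preimage_mono (Uset_succ_subset k))

lemma Uset_antitone : Antitone (Uset T p B) :=
  antitone_nat_of_succ_le (Uset_succ_subset T p B)

lemma Qann_eq_diff : ∀ k, Qann T p B k = Uset T p B k \ Uset T p B (k + 1)
  | 0 => by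
    ext x
    simp only [Qann, Uset, mem_inter_iff, mem_preimage, mem_compl_iff, Set.mem_sdiff]
    tauto
  | k + 1 => by
    ext x
    simp only [Qann, Uset, Qann_eq_diff k, mem_inter_iff, mem_preimage, Set.mem_sdiff]
    tauto

lemma setOf_firstEntry_eq_preimage_Qann (k : ℕ) :
    {x | T^[p] x ∈ Qann T p B k ∧ ∀ j < k, T^[p] x ∉ Qann T p B j} =
      (T^[p]) ⁻¹' Qann T p B k := by
  refine subset_antisymm (fun x hx => hx.1) fun x hx => ⟨hx, fun j hj hxj => ?_⟩
  rw [Qann_eq_diff] at hx hxj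
  exact hxj.2 (Uset_antitone T p B hj hx.1)

lemma Eset_inter_preimage_of_subset {A : Set X} (hA : A ⊆ B) :
    Eset T p B ∩ (T^[p]) ⁻¹' A = (T^[p]) ⁻¹' A \ B := by
  ext x
  simp only [Eset, mem_inter_iff, Set.mem_sdiff, mem_preimage]
  exact ⟨fun h => ⟨h.2, h.1.2⟩, fun h => ⟨⟨hA h.1, h.2⟩, h.1⟩⟩

end ReturnSets

section ReturnMeasures

variable {X : Type*} [MeasurableSpace X] {μ : Measure X} {T : X → X} {p : ℕ} {B : Set X}

lemma measurableSet_Uset (hT : Measurable (T^[p])) (hB : MeasurableSet B) :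
    ∀ k, MeasurableSet (Uset T p B k)
  | 0 => hB
  | k + 1 => (hT (measurableSet_Uset hT hB k)).inter hB

lemma measurableSet_Qann (hT : Measurable (T^[p])) (hB : MeasurableSet B) (k : ℕ) :
    MeasurableSet (Qann T p B k) := by
  rw [Qann_eq_diff]
  exact (measurableSet_Uset hT hB k).diff (measurableSet_Uset hT hB (k + 1))

lemma measurableSet_Eset (hT : Measurable (T^[p])) (hB : MeasurableSet B) :
    MeasurableSet (Eset T p B) :=
  (hT hB).diff hB

lemma measure_Eset_inter_preimage_add (hT : MeasurePreserving (T^[p]) μ μ)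
    (hB : MeasurableSet B) {A : Set X} (hA : A ⊆ B) (hAm : MeasurableSet A) :
    μ (Eset T p B ∩ (T^[p]) ⁻¹' A) + μ ((T^[p]) ⁻¹' A ∩ B) = μ A := by
  rw [Eset_inter_preimage_of_subset T p B hA, add_comm, measure_inter_add_sdiff _ hB,
    hT.measure_preimage hAm.nullMeasurableSet]

lemma measure_Qann_add_measure_Uset_succ (hT : Measurable (T^[p])) (hB : MeasurableSet B)
    (k : ℕ) : μ (Qann T p B k) + μ (Uset T p B (k + 1)) = μ (Uset T p B k) := by
  have h := measure_sdiff_add_inter (μ := μ) (Uset T p B k) (measurableSet_Uset hT hB (k + 1))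
  rwa [inter_eq_right.mpr (Uset_succ_subset T p B k), ← Qann_eq_diff] at h

variable [IsFiniteMeasure μ]

lemma measure_Eset_inter_preimage_Uset (hT : MeasurePreserving (T^[p]) μ μ)
    (hB : MeasurableSet B) (k : ℕ) :
    μ (Eset T p B ∩ (T^[p]) ⁻¹' Uset T p B k) = μ (Qann T p B k) := by
  have h := measure_Eset_inter_preimage_add hT hB (Uset_subset T p B k)
    (measurableSet_Uset hT.measurable hB k)
  rw [← measure_Qann_add_measure_Uset_succ hT.measurable hB k] at h
  exact (ENNReal.add_left_inj (measure_ne_top μ _)).mp h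

lemma measure_Eset (hT : MeasurePreserving (T^[p]) μ μ) (hB : MeasurableSet B) :
    μ (Eset T p B) = μ (Qann T p B 0) := by
  rw [← measure_Eset_inter_preimage_Uset hT hB 0]
  exact congrArg μ (inter_eq_left.mpr fun x hx => hx.1).symm

lemma cond_preimage_Uset (hT : MeasurePreserving (T^[p]) μ μ) (hB : MeasurableSet B) (k : ℕ) :
    μ[(T^[p]) ⁻¹' Uset T p B k | Eset T p B] = μ (Qann T p B k) / μ (Qann T p B 0) := by
  rw [cond_apply (measurableSet_Eset hT.measurable hB), measure_Eset_inter_preimage_Uset hT hB,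
    measure_Eset hT hB, ENNReal.div_eq_inv_mul]

lemma measureReal_Qann (hT : Measurable (T^[p])) (hB : MeasurableSet B) (k : ℕ) :
    μ.real (Qann T p B k) = μ.real (Uset T p B k) - μ.real (Uset T p B (k + 1)) := by
  rw [Qann_eq_diff]
  exact measureReal_sdiff (Uset_succ_subset T p B k) (measurableSet_Uset hT hB (k + 1))

lemma toReal_cond_preimage_Qann (hT : MeasurePreserving (T^[p]) μ μ) (hB : MeasurableSet B)
    (k : ℕ) : (μ[(T^[p]) ⁻¹' Qann T p B k | Eset T p B]).toReal =
      ((μ.real (Uset T p B k) - μ.real (Uset T p B (k + 1))) -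
        (μ.real (Uset T p B (k + 1)) - μ.real (Uset T p B (k + 2)))) /
      (μ.real (Uset T p B 0) - μ.real (Uset T p B 1)) := by
  have h := measure_Eset_inter_preimage_add hT hB (Qann_subset T p B k)
    (measurableSet_Qann hT.measurable hB k)
  have hE : μ.real (Eset T p B ∩ (T^[p]) ⁻¹' Qann T p B k) =
      μ.real (Qann T p B k) - μ.real (Qann T p B (k + 1)) := by
    rw [measureReal_def, measureReal_def, measureReal_def, ← h,
      ENNReal.toReal_add (measure_ne_top μ _) (measure_ne_top μ _)]
    exact (add_sub_cancel_right _ _).symm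
  rw [cond_apply (measurableSet_Eset hT.measurable hB), ENNReal.toReal_mul, ENNReal.toReal_inv,
    measure_Eset hT hB, ← measureReal_def, ← measureReal_def, hE, inv_mul_eq_div]
  simp only [measureReal_Qann hT.measurable hB]

end ReturnMeasures

lemma HasDerivAt.eventually_abs_dist_sub_le {f : ℝ → ℝ} {d x ε : ℝ} (hf : HasDerivAt f d x)
    (hε : 0 < ε) : ∀ᶠ y in 𝓝 x, |dist (f y) (f x) - |d| * dist y x| ≤ ε * dist y x := by
  filter_upwards [hf.isLittleO.def hε] with y hy
  rw [Real.dist_eq, Real.dist_eq, ← abs_mul, mul_comm]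
  simpa only [Real.norm_eq_abs, smul_eq_mul] using (abs_abs_sub_abs_le_abs_sub _ _).trans hy

lemma Filter.Tendsto.eventually_forall_mem_ball {Y ι : Type*} [PseudoMetricSpace Y] {y : Y}
    {P : Y → Prop} (hP : ∀ᶠ z in 𝓝 y, P z) {r : ι → ℝ} {l : Filter ι}
    (hr : Tendsto r l (𝓝 0)) : ∀ᶠ n in l, ∀ z ∈ Metric.ball y (r n), P z := by
  obtain ⟨δ, hδ, hPδ⟩ := Metric.eventually_nhds_iff_ball.mp hP
  filter_upwards [hr.eventually (eventually_le_nhds hδ)] with n hn z hz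
  exact hPδ z (Metric.ball_subset_ball hn hz)

section BallReturns

variable {Y : Type*} [PseudoMetricSpace Y] {T : Y → Y} {p : ℕ} {ζ : Y} {r : ℝ}

lemma Uset_ball_subset_ball {a : ℝ} (ha : 0 < a)
    (hlow : ∀ x ∈ Metric.ball ζ r, a * dist x ζ ≤ dist (T^[p] x) ζ) :
    ∀ k, Uset T p (Metric.ball ζ r) k ⊆ Metric.ball ζ (r / a ^ k)
  | 0 => by simp [Uset]
  | k + 1 => fun x ⟨hTx, hx⟩ => by
    have h := (hlow x hx).trans_lt (Uset_ball_subset_ball ha hlow k hTx)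
    rw [Metric.mem_ball, pow_succ, ← div_div, lt_div_iff₀ ha, mul_comm]
    exact h

lemma ball_subset_Uset_ball {A : ℝ} (hA : 1 ≤ A)
    (hup : ∀ x ∈ Metric.ball ζ r, dist (T^[p] x) ζ ≤ A * dist x ζ) :
    ∀ k, Metric.ball ζ (r / A ^ k) ⊆ Uset T p (Metric.ball ζ r) k
  | 0 => by simp [Uset]
  | k + 1 => fun x hx => by
    have hA0 : 0 < A := one_pos.trans_le hA
    rw [Metric.mem_ball, pow_succ, ← div_div, lt_div_iff₀ hA0, mul_comm] at hx
    have hr : 0 < r :=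
      (div_pos_iff_of_pos_right (pow_pos hA0 k)).mp ((mul_nonneg hA0.le dist_nonneg).trans_lt hx)
    have hx' : dist x ζ < r := calc
      dist x ζ ≤ A * dist x ζ := le_mul_of_one_le_left dist_nonneg hA
      _ < r / A ^ k := hx
      _ ≤ r := div_le_self hr.le (one_le_pow₀ hA)
    exact ⟨ball_subset_Uset_ball hA hup k ((hup x hx').trans_lt hx), hx'⟩

end BallReturns

section Density

lemma withDensity_apply_le_mul_of_forall_le {α : Type*} [MeasurableSpace α] {ν : Measure α}
    {f : α → ℝ≥0∞} {s : Set α} {c : ℝ≥0∞} (hs : MeasurableSet s) (h : ∀ x ∈ s, f x ≤ c) :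
    ν.withDensity f s ≤ c * ν s := by
  rw [withDensity_apply _ hs, ← setLIntegral_const]
  exact setLIntegral_mono' hs h

lemma mul_le_withDensity_apply_of_forall_le {α : Type*} [MeasurableSpace α] {ν : Measure α}
    {f : α → ℝ≥0∞} {s : Set α} {c : ℝ≥0∞} (hs : MeasurableSet s) (h : ∀ x ∈ s, c ≤ f x) :
    c * ν s ≤ ν.withDensity f s := by
  rw [withDensity_apply _ hs, ← setLIntegral_const]
  exact setLIntegral_mono' hs h

variable {μ : Measure ℝ} {ρ : ℝ → ℝ} {ζ : ℝ}

lemma tendsto_measureReal_ball_div_two_mul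
    (hμ : μ = volume.withDensity fun x => ENNReal.ofReal (ρ x)) (hρ : ContinuousAt ρ ζ)
    (hρζ : 0 ≤ ρ ζ) :
    Tendsto (fun s => μ.real (Metric.ball ζ s) / (2 * s)) (𝓝[>] 0) (𝓝 (ρ ζ)) := by
  rw [Metric.tendsto_nhdsWithin_nhds]
  intro ε hε
  obtain ⟨δ, hδ, hρδ⟩ := Metric.continuousAt_iff.mp hρ (ε / 2) (half_pos hε)
  refine ⟨δ, hδ, fun s (hs : 0 < s) hsδ => ?_⟩
  rw [Real.dist_eq, sub_zero, abs_of_pos hs] at hsδ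
  have hclose (x : ℝ) (hx : x ∈ Metric.ball ζ s) : |ρ x - ρ ζ| < ε / 2 :=
    hρδ (Metric.mem_ball.mp hx |>.trans hsδ)
  have hvol : volume (Metric.ball ζ s) = ENNReal.ofReal (2 * s) := Real.volume_ball ζ s
  have hup : μ (Metric.ball ζ s) ≤ ENNReal.ofReal ((ρ ζ + ε / 2) * (2 * s)) := by
    have h := withDensity_apply_le_mul_of_forall_le (ν := volume)
      (f := fun x => ENNReal.ofReal (ρ x))
      (c := ENNReal.ofReal (ρ ζ + ε / 2)) measurableSet_ball fun x hx =>
      ENNReal.ofReal_le_ofReal (by linarith [(abs_sub_lt_iff.mp (hclose x hx)).1])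
    rwa [← hμ, hvol, ← ENNReal.ofReal_mul (by positivity)] at h
  have hlow : (ρ ζ - ε / 2) * (2 * s) ≤ μ.real (Metric.ball ζ s) := by
    have h := mul_le_withDensity_apply_of_forall_le (ν := volume)
      (f := fun x => ENNReal.ofReal (ρ x))
      (c := ENNReal.ofReal (ρ ζ - ε / 2)) measurableSet_ball fun x hx =>
      ENNReal.ofReal_le_ofReal (by linarith [(abs_sub_lt_iff.mp (hclose x hx)).2])
    rw [← hμ, hvol] at h
    -- `ENNReal.ofReal` truncates at `0`, and `ρ ζ - ε / 2` may be negative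
    calc (ρ ζ - ε / 2) * (2 * s)
        ≤ (ENNReal.ofReal (ρ ζ - ε / 2) * ENNReal.ofReal (2 * s)).toReal := by
          rw [ENNReal.toReal_mul, ENNReal.toReal_ofReal', ENNReal.toReal_ofReal (by positivity)]
          gcongr
          exact le_max_left _ _
      _ ≤ μ.real (Metric.ball ζ s) :=
          ENNReal.toReal_mono (ne_top_of_le_ne_top ENNReal.ofReal_ne_top hup) h
  have hup' : μ.real (Metric.ball ζ s) ≤ (ρ ζ + ε / 2) * (2 * s) :=
    ENNReal.toReal_le_of_le_ofReal (by positivity) hup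
  rw [Real.dist_eq, abs_sub_lt_iff]
  constructor
  · linarith [(div_le_iff₀ (by positivity)).mpr hup']
  · linarith [(le_div_iff₀ (by positivity)).mpr hlow]

lemma tendsto_measureReal_ball_div_div_measureReal_ball
    (hμ : μ = volume.withDensity fun x => ENNReal.ofReal (ρ x)) (hρ : ContinuousAt ρ ζ)
    (hρζ : 0 < ρ ζ) {c : ℝ} (hc : 0 < c) :
    Tendsto (fun s => μ.real (Metric.ball ζ (s / c)) / μ.real (Metric.ball ζ s)) (𝓝[>] 0)
      (𝓝 c⁻¹) := by
  have hg := tendsto_measureReal_ball_div_two_mul hμ hρ hρζ.le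
  have hdiv : Tendsto (fun s : ℝ => s / c) (𝓝[>] 0) (𝓝[>] 0) := by
    refine tendsto_nhdsWithin_iff.2 ⟨?_, ?_⟩
    · simpa using ((continuous_id.div_const c).tendsto 0).mono_left nhdsWithin_le_nhds
    · filter_upwards [self_mem_nhdsWithin] with s (hs : 0 < s) using div_pos hs hc
  have h := ((hg.comp hdiv).div hg hρζ.ne').const_mul c⁻¹
  rw [div_self hρζ.ne', mul_one] at h
  refine h.congr' ?_
  filter_upwards [self_mem_nhdsWithin] with s (hs : 0 < s)
  simp only [Pi.div_apply, Function.comp_apply]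
  field_simp

theorem tendsto_measureReal_Uset_div_measureReal_ball [IsFiniteMeasure μ]
    (hμ : μ = volume.withDensity fun x => ENNReal.ofReal (ρ x)) (hρ : ContinuousAt ρ ζ)
    (hρζ : 0 < ρ ζ) {T : ℝ → ℝ} {p : ℕ} {d : ℝ} (hper : T^[p] ζ = ζ)
    (hd : HasDerivAt (T^[p]) d ζ) (hd1 : 1 ≤ |d|) {r : ℕ → ℝ}
    (hr : Tendsto r atTop (𝓝[>] 0)) (k : ℕ) :
    Tendsto (fun n => μ.real (Uset T p (Metric.ball ζ (r n)) k) / μ.real (Metric.ball ζ (r n)))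
      atTop (𝓝 (|d|⁻¹ ^ k)) := by
  have hd0 : 0 < |d| := one_pos.trans_le hd1
  have hbound {c : ℝ} (hc : 0 < c) : Tendsto
      (fun n => μ.real (Metric.ball ζ (r n / c ^ k)) / μ.real (Metric.ball ζ (r n))) atTop
      (𝓝 (c ^ k)⁻¹) :=
    (tendsto_measureReal_ball_div_div_measureReal_ball hμ hρ hρζ (pow_pos hc k)).comp hr
  have hcont : ContinuousAt (fun c : ℝ => (c ^ k)⁻¹) |d| :=
    (continuousAt_id.pow k).inv₀ (pow_ne_zero k hd0.ne')
  have hr0 : Tendsto r atTop (𝓝 0) := hr.mono_right nhdsWithin_le_nhds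
  -- squeeze between ratios of balls of radii `r n / A ^ k` and `r n / a ^ k`, `a < |d| < A`
  rw [inv_pow, tendsto_order]
  refine ⟨fun c hc => ?_, fun c hc => ?_⟩
  · obtain ⟨A, hdA, hcA⟩ := (hcont.eventually (lt_mem_nhds hc)).exists_gt
    filter_upwards [(hbound (hd0.trans hdA)).eventually (lt_mem_nhds hcA),
      hr0.eventually_forall_mem_ball (hd.eventually_abs_dist_sub_le (sub_pos.2 hdA))]
      with n hn hball
    refine hn.trans_le (div_le_div_of_nonneg_right (measureReal_mono
      (ball_subset_Uset_ball (hd1.trans hdA.le) (fun x hx => ?_) k)) measureReal_nonneg)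
    have h := hball x hx
    rw [hper] at h
    linarith [(abs_le.mp h).2]
  · obtain ⟨a, had, hca, ha⟩ :=
      ((hcont.eventually (gt_mem_nhds hc)).and (lt_mem_nhds hd0)).exists_lt
    filter_upwards [(hbound ha).eventually (gt_mem_nhds hca),
      hr0.eventually_forall_mem_ball (hd.eventually_abs_dist_sub_le (sub_pos.2 had))]
      with n hn hball
    refine (div_le_div_of_nonneg_right (measureReal_mono
      (Uset_ball_subset_ball ha (fun x hx => ?_) k)) measureReal_nonneg).trans_lt hn
    have h := hball x hx
    rw [hper] at h
    linarith [(abs_le.mp h).1]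

end Density

lemma tendsto_second_difference_div {ι : Type*} {l : Filter ι} {a : ℕ → ι → ℝ} {c : ℝ}
    (hc : c ≠ 1) (ha : ∀ j, Tendsto (a j) l (𝓝 (c ^ j))) (k : ℕ) :
    Tendsto (fun n => ((a k n - a (k + 1) n) - (a (k + 1) n - a (k + 2) n)) / (a 0 n - a 1 n))
      l (𝓝 ((1 - c) * c ^ k)) := by
  have hc' : c ^ 0 - c ^ 1 ≠ 0 := by simpa [sub_eq_zero] using hc.symm
  have h := (((ha k).sub (ha (k + 1))).sub ((ha (k + 1)).sub (ha (k + 2)))).div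
    ((ha 0).sub (ha 1)) hc'
  rwa [show (c ^ k - c ^ (k + 1) - (c ^ (k + 1) - c ^ (k + 2))) / (c ^ 0 - c ^ 1) =
    (1 - c) * c ^ k by field_simp [sub_ne_zero.mpr hc.symm]; ring] at h

theorem statement13_general (T : ℝ → ℝ) (ζ : ℝ) (p : ℕ) (hper : T^[p] ζ = ζ)
    (U : Set ℝ) (hU : IsOpen U) (hζU : ζ ∈ U)
    (hC1 : ContDiffOn ℝ 1 (T^[p]) U) (hexp : 1 < |deriv (T^[p]) ζ|)
    (μ : Measure ℝ) [IsProbabilityMeasure μ] (hinv : MeasurePreserving T μ μ)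
    (ρ : ℝ → ℝ) (hρ : μ = MeasureTheory.volume.withDensity (fun x => ENNReal.ofReal (ρ x)))
    (hρcont : ContinuousAt ρ ζ) (hρpos : 0 < ρ ζ)
    (r : ℕ → ℝ) (hrpos : ∀ n, 0 < r n) (hr0 : Tendsto r atTop (𝓝 0)) :
    (∀ n : ℕ, ∀ k : ℕ,
      μ[|Eset T p (Metric.ball ζ (r n))] ((T^[p]) ⁻¹' (Uset T p (Metric.ball ζ (r n)) k))
        = μ (Qann T p (Metric.ball ζ (r n)) k) / μ (Qann T p (Metric.ball ζ (r n)) 0)) ∧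
    ∀ k : ℕ, Tendsto (fun n =>
        μ[|Eset T p (Metric.ball ζ (r n))]
          {x | T^[p] x ∈ Qann T p (Metric.ball ζ (r n)) k ∧
            ∀ j < k, T^[p] x ∉ Qann T p (Metric.ball ζ (r n)) j}) atTop
      (𝓝 (ENNReal.ofReal
        ((1 - |deriv (T^[p]) ζ|⁻¹) * (|deriv (T^[p]) ζ|⁻¹) ^ k))) := by
  have hS : MeasurePreserving (T^[p]) μ μ := hinv.iterate p
  have hB (n : ℕ) : MeasurableSet (Metric.ball ζ (r n)) := measurableSet_ball
  refine ⟨fun n k => cond_preimage_Uset hS (hB n) k, fun k => ?_⟩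
  have hderiv : HasDerivAt (T^[p]) (deriv (T^[p]) ζ) ζ :=
    ((hC1.differentiableOn one_ne_zero).differentiableAt (hU.mem_nhds hζU)).hasDerivAt
  have hr : Tendsto r atTop (𝓝[>] 0) :=
    tendsto_nhdsWithin_iff.2 ⟨hr0, Eventually.of_forall hrpos⟩
  have hratio (j : ℕ) := tendsto_measureReal_Uset_div_measureReal_ball hρ hρcont hρpos hper
    hderiv hexp.le hr j
  -- for `j = 0` the ratio is `μ(B_n) / μ(B_n)`, which tends to `1`
  have hball : ∀ᶠ n in atTop, μ.real (Metric.ball ζ (r n)) ≠ 0 := by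
    filter_upwards [(hratio 0).eventually_ne (pow_ne_zero 0 (inv_ne_zero (by positivity)))]
      with n hn h
    exact hn (by simp [Uset, h])
  refine (ENNReal.tendsto_ofReal (tendsto_second_difference_div
    (inv_lt_one_of_one_lt₀ hexp).ne hratio k)).congr' ?_
  filter_upwards [hball] with n hn
  rw [setOf_firstEntry_eq_preimage_Qann, ← ENNReal.ofReal_toReal (measure_ne_top _ _),
    toReal_cond_preimage_Qann hS (hB n)]
  congr 1
  simp only [← sub_div]
  exact div_div_div_cancel_right₀ hn _ _

/-- In the setting of a periodic point `ζ` of period `p` at which `T^p`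
is locally a `C¹` diffeomorphism with `|(T^p)'(ζ)| > 1` and an invariant absolutely
continuous measure with density continuous and positive at `ζ`, set
`θ = 1 - |(T^p)'(ζ)|⁻¹`. For shrinking balls `B_n` around `ζ` one has the exact identity
`μ_{E(B_n)}(T^{-p}(U_k(B_n))) = μ(Q_k(B_n))/μ(Q(B_n))` for all `n, k`, and consequently
the cluster size `K_n(x) = inf{k : T^p x ∈ Q_k(B_n)}` satisfies
`μ_{E(B_n)}({K_n = k}) → θ (1-θ)^k` for every `k`, i.e. `K_n` converges in distribution
to the geometric law of parameter `θ` on `{0,1,2,…}`. -/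
theorem statement13 (T : ℝ → ℝ) (hTmeas : Measurable T)
    (l u : ℝ) (hlu : l < u) (hmap : Set.MapsTo T (Set.Icc l u) (Set.Icc l u))
    (ζ : ℝ) (hζI : ζ ∈ Set.Icc l u)
    (p : ℕ) (hp : 1 ≤ p) (hper : T^[p] ζ = ζ)
    (U : Set ℝ) (hU : IsOpen U) (hζU : ζ ∈ U)
    (hC1 : ContDiffOn ℝ 1 (T^[p]) U) (hinj : Set.InjOn (T^[p]) U)
    (hd : ∀ x ∈ U, deriv (T^[p]) x ≠ 0) (hexp : 1 < |deriv (T^[p]) ζ|)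
    (μ : Measure ℝ) [IsProbabilityMeasure μ] (hinv : MeasurePreserving T μ μ)
    (hsupp : μ (Set.Icc l u)ᶜ = 0)
    (ρ : ℝ → ℝ) (hρ : μ = MeasureTheory.volume.withDensity (fun x => ENNReal.ofReal (ρ x)))
    (hρcont : ContinuousAt ρ ζ) (hρpos : 0 < ρ ζ)
    (r : ℕ → ℝ) (hrpos : ∀ n, 0 < r n) (hr0 : Tendsto r atTop (𝓝 0)) :
    (∀ n : ℕ, ∀ k : ℕ,
      μ[|Eset T p (Metric.ball ζ (r n))] ((T^[p]) ⁻¹' (Uset T p (Metric.ball ζ (r n)) k))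
        = μ (Qann T p (Metric.ball ζ (r n)) k) / μ (Qann T p (Metric.ball ζ (r n)) 0)) ∧
    ∀ k : ℕ, Tendsto (fun n =>
        μ[|Eset T p (Metric.ball ζ (r n))]
          {x | T^[p] x ∈ Qann T p (Metric.ball ζ (r n)) k ∧
            ∀ j < k, T^[p] x ∉ Qann T p (Metric.ball ζ (r n)) j}) atTop
      (𝓝 (ENNReal.ofReal
        ((1 - |deriv (T^[p]) ζ|⁻¹) * (|deriv (T^[p]) ζ|⁻¹) ^ k))) :=
  statement13_general T ζ p hper U hU hζU hC1 hexp μ hinv ρ hρ hρcont hρpos r hrpos hr0
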